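/- Let n ≥ 2, 2 ≤ s ≤ n − 1, and α_0, …, α_n > 0. Define C = (s − (n+1)/2)/(Σ_{i=0}^n 1/α_i) and c_α = (1/2 + C/α_0, …, 1/2 + C/α_n). Then: (a) c_α is the unique point c ∈ ℝ^{n+1} with Σ_{i=0}^n c_i = s such that the value q_α(v − c) is the same for all v ∈ W(n+1,s); (b) c_α − h is q_α-orthogonal to the hyperplane {x : Σ_{i=0}^n x_i = 0}, where h = (1/2, …, 1/2), i.e., Σ_{i=0}^n α_i ((c_α)_i − 1/2) y_i = 0 for every y with Σ_{i=0}^n y_i = 0. Hence c_α is the q_α-orthogonal projection of h onto the hyperplane Σ_{i=0}^n x_i = s. -/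

import Mathlib

open Finset

noncomputable section

/-- The vertex set `W(n+1,s) = {x ∈ {0,1}^{n+1} : Σ x_i = s}`. -/
def Wset (n s : ℕ) : Set (Fin (n+1) → ℝ) :=
  {x | (∀ i, x i = 0 ∨ x i = 1) ∧ ∑ i, x i = (s : ℝ)}

/-- The quadratic form `q_α(x) = Σ α_i x_i²`. -/
def qForm {n : ℕ} (α : Fin (n+1) → ℝ) (x : Fin (n+1) → ℝ) : ℝ :=
  ∑ i, α i * (x i) ^ 2

/-! On a 0/1-vector `v` we have `v_i² = v_i`, so `q_α(v − c)` is an affine function of `v`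
whose linear part has coefficients `α_i (c_i − 1/2)`. It is constant on `W(n+1,s)` exactly
when these coefficients are all equal: if they are, the linear part is a multiple of `Σ v_i = s`;
conversely, for `1 ≤ s ≤ n` any two coordinates `i, j` can be swapped between two vertices
that agree elsewhere. Equal coefficients `α_i (c_i − 1/2) = κ` say both that `c − h` is
`q_α`-orthogonal to `Σ x_i = 0` and that `c_i = 1/2 + κ/α_i`, and `Σ c_i = s` pins down `κ = C`. -/

theorem Finset.apply_eq_of_forall_card_eq_sum_eq {ι M : Type*} [Fintype ι] [DecidableEq ι]
    [AddCancelCommMonoid M] {f : ι → M} {s : ℕ} {r : M} (hs : 1 ≤ s)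
    (hsι : s < Fintype.card ι) (h : ∀ T : Finset ι, #T = s → ∑ k ∈ T, f k = r) (i j : ι) :
    f i = f j := by
  rcases eq_or_ne i j with rfl | hij
  · rfl
  obtain ⟨T, hT, hTcard⟩ := exists_subset_card_eq (s := univ \ {i, j}) (n := s - 1) (by
    rw [card_sdiff_of_subset (subset_univ _), card_univ, card_pair hij]
    omega)
  have hi : i ∉ T := fun hiT => by simpa using hT hiT
  have hj : j ∉ T := fun hjT => by simpa using hT hjT
  have hsum_i := h (insert i T) (by rw [card_insert_of_notMem hi]; omega)
  have hsum_j := h (insert j T) (by rw [card_insert_of_notMem hj]; omega)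
  rw [sum_insert hi] at hsum_i
  rw [sum_insert hj, ← hsum_i] at hsum_j
  exact (add_right_cancel hsum_j).symm

variable {n s : ℕ} {α c : Fin (n+1) → ℝ} {κ : ℝ}

theorem qForm_sub_of_binary (α c : Fin (n+1) → ℝ) {v : Fin (n+1) → ℝ}
    (hv : ∀ i, v i = 0 ∨ v i = 1) :
    qForm α (v - c) = qForm α c - 2 * ∑ i, v i * (α i * (c i - 1 / 2)) := by
  rw [qForm, qForm, mul_sum, ← sum_sub_distrib]
  refine sum_congr rfl fun i _ => ?_
  have hvi : v i ^ 2 = v i := by rcases hv i with h | h <;> simp [h]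
  simp only [Pi.sub_apply]
  linear_combination α i * hvi

theorem indicator_mem_Wset {T : Finset (Fin (n+1))} (hT : #T = s) :
    (fun k => if k ∈ T then (1 : ℝ) else 0) ∈ Wset n s := by
  refine ⟨fun i => ?_, ?_⟩
  · by_cases h : i ∈ T <;> simp [h]
  · simp [hT]

theorem qForm_sub_eq_of_forall_mul_sub_half_eq (hκ : ∀ i, α i * (c i - 1 / 2) = κ)
    {v : Fin (n+1) → ℝ} (hv : v ∈ Wset n s) :
    qForm α (v - c) = qForm α c - 2 * κ * s := by
  rw [qForm_sub_of_binary α c hv.1, ← hv.2]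
  simp_rw [hκ, ← sum_mul]
  ring

theorem mul_sub_half_eq_of_equidistant (hs : 1 ≤ s) (hsn : s ≤ n)
    (h : ∃ r : ℝ, ∀ v ∈ Wset n s, qForm α (v - c) = r) (i j : Fin (n+1)) :
    α i * (c i - 1 / 2) = α j * (c j - 1 / 2) := by
  obtain ⟨r, hr⟩ := h
  refine apply_eq_of_forall_card_eq_sum_eq (f := fun i => α i * (c i - 1 / 2))
    (r := (qForm α c - r) / 2) hs
    (by simpa using Nat.lt_succ_of_le hsn) (fun T hT => ?_) i j
  have hT := hr _ (indicator_mem_Wset hT)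
  rw [qForm_sub_of_binary α c (fun k => by by_cases h : k ∈ T <;> simp [h])] at hT
  simp only [ite_mul, one_mul, zero_mul, sum_ite_mem, univ_inter] at hT
  linarith

theorem eq_of_forall_mul_sub_half_eq (hα : ∀ i, α i ≠ 0) (hκ : ∀ i, α i * (c i - 1 / 2) = κ) :
    c = fun i => 1 / 2 + κ / α i := by
  funext i
  rw [← hκ i]
  field_simp [hα i]
  ring

theorem sum_eq_of_forall_mul_sub_half_eq (hα : ∀ i, α i ≠ 0)
    (hκ : ∀ i, α i * (c i - 1 / 2) = κ) :
    ∑ i, c i = ((n : ℝ) + 1) / 2 + κ * ∑ i, (α i)⁻¹ := by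
  rw [eq_of_forall_mul_sub_half_eq hα hκ, sum_add_distrib, mul_sum]
  simp [div_eq_mul_inv]

theorem circumcenter_is_projection (n s : ℕ) (hs : 2 ≤ s)
    (hsn : s + 1 ≤ n) (α : Fin (n+1) → ℝ) (hα : ∀ i, 0 < α i) :
    let C : ℝ := ((s : ℝ) - ((n : ℝ) + 1) / 2) / (∑ i, (α i)⁻¹)
    let cα : Fin (n+1) → ℝ := fun i => 1 / 2 + C / α i
    -- (a) `c_α` is the unique equidistant point on the hyperplane `Σ x_i = s`
    ((∑ i, cα i = (s : ℝ)) ∧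
     (∃ r : ℝ, ∀ v ∈ Wset n s, qForm α (v - cα) = r) ∧
     (∀ c : Fin (n+1) → ℝ, ∑ i, c i = (s : ℝ) →
        (∃ r : ℝ, ∀ v ∈ Wset n s, qForm α (v - c) = r) → c = cα)) ∧
    -- (b) `c_α − h` is `q_α`-orthogonal to the hyperplane `Σ x_i = 0`
    (∀ y : Fin (n+1) → ℝ, ∑ i, y i = 0 →
        ∑ i, α i * (cα i - 1 / 2) * y i = 0) := by
  intro C cα
  have hα0 : ∀ i, α i ≠ 0 := fun i => (hα i).ne'
  have hS : ∑ i, (α i)⁻¹ ≠ 0 := (sum_pos (fun i _ => inv_pos.2 (hα i)) univ_nonempty).ne'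
  have hcα : ∀ i, α i * (cα i - 1 / 2) = C := fun i => by
    simp only [cα, add_sub_cancel_left]
    field_simp [hα0 i]
  have hC : ∀ κ : ℝ, ((n : ℝ) + 1) / 2 + κ * ∑ i, (α i)⁻¹ = s ↔ κ = C := fun κ => by
    rw [eq_div_iff hS]
    constructor <;> intro h <;> linarith
  refine ⟨⟨?_, ⟨_, fun v hv => qForm_sub_eq_of_forall_mul_sub_half_eq hcα hv⟩, ?_⟩, ?_⟩
  · rw [sum_eq_of_forall_mul_sub_half_eq hα0 hcα, hC]
  · rintro c hc hequi
    have hκ : ∀ i, α i * (c i - 1 / 2) = α 0 * (c 0 - 1 / 2) :=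
      fun i => mul_sub_half_eq_of_equidistant (by omega) (by omega) hequi i 0
    rw [sum_eq_of_forall_mul_sub_half_eq hα0 hκ, hC] at hc
    rw [eq_of_forall_mul_sub_half_eq hα0 hκ, hc]
  · intro y hy
    simp_rw [hcα, ← mul_sum, hy, mul_zero]
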